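/- (Jet-norm estimate for composition with a real analytic map.) Let p, q ∈ ℕ, let U ⊆ (Fin p → ℝ) and V ⊆ (Fin q → ℝ) be open sets, and let Φ : (Fin p → ℝ) → (Fin q → ℝ) satisfy AnalyticOnNhd ℝ Φ U and Φ '' U ⊆ V. Then for every compact set K ⊆ U there exist C > 0 and σ > 0 such that for every f : (Fin q → ℝ) → ℝ with ContDiffOn ℝ ⊤ f V, every m ∈ ℕ, and every x ∈ K: Σ_{j=0}^{m} ‖iteratedFDerivWithin ℝ j (f ∘ Φ) U x‖ / j ! ≤ C * σ^(−m) * Σ_{j=0}^{m} ‖iteratedFDerivWithin ℝ j f V (Φ x)‖ / j !. -/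

import Mathlib

/-!
On the compact set `K` the analytic map `Φ` obeys uniform Cauchy estimates
`‖D^k Φ y‖ ≤ k! A b^k`: re-expand its power series around points near a centre and cover `K`
by finitely many such balls. Faà di Bruno's formula writes `D^n (f ∘ Φ) x` as a sum over ordered
partitions `c` of `Fin n` of `D^{|c|} f (Φ x)` composed with the `D^{n_i} Φ x`, `n_i` the block
sizes. With `‖D^k f (Φ x)‖ ≤ k! S`, where `S` is the `m`-jet norm of `f` at `Φ x`, the term of `c`
is at most `S b^n A^{|c|} |c|! ∏ n_i!`, and these weights sum to at most `(A + 2)^n n!`, by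
induction on `n`, adding one point at a time to a partition. So `‖D^n (f ∘ Φ) x‖ / n!` is at most
`S ((A + 2) b)^n`, and summing over `n ≤ m` costs a factor `m + 1 ≤ 2^m`.
-/

open Function Set Finset
open scoped Nat ENNReal

variable {𝕜 E F G : Type*} [NontriviallyNormedField 𝕜] [NormedAddCommGroup E] [NormedSpace 𝕜 E]
  [NormedAddCommGroup F] [NormedSpace 𝕜 F] [NormedAddCommGroup G] [NormedSpace 𝕜 G]

namespace FormalMultilinearSeries

variable (p : FormalMultilinearSeries 𝕜 E F)

lemma norm_changeOriginSeries_le (k l : ℕ) :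
    ‖p.changeOriginSeries k l‖ ≤ (k + l).choose l * ‖p (k + l)‖ := by
  have hcard : Fintype.card { s : Finset (Fin (k + l)) // s.card = l } = (k + l).choose l := by
    rw [Fintype.card_subtype, ← Finset.powerset_univ, ← powersetCard_eq_filter, card_powersetCard,
      card_univ, Fintype.card_fin]
  simpa [hcard] using NNReal.coe_le_coe.2 (p.nnnorm_changeOriginSeries_le_tsum k l)

lemma norm_changeOrigin_mul_pow_le {C a : ℝ} (ha : 0 < a) (hp : ∀ n, ‖p n‖ * a ^ n ≤ C)
    {x : E} (hx : 2 * ‖x‖ ≤ a) (k : ℕ) :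
    ‖p.changeOrigin x k‖ * (a / 2) ^ k ≤ 2 * C := by
  have hC : 0 ≤ C := (by positivity : 0 ≤ ‖p 0‖ * a ^ 0).trans (hp 0)
  have hgeom : HasSum (fun l : ℕ ↦ C / a ^ k * ((l + k).choose k * (1 / 2 : ℝ) ^ l))
      (C / a ^ k * 2 ^ (k + 1)) := by
    have h := hasSum_choose_mul_geometric_of_norm_lt_one k (by norm_num : ‖(1 / 2 : ℝ)‖ < 1)
    rw [show (1 : ℝ) / (1 - 1 / 2) ^ (k + 1) = 2 ^ (k + 1) by norm_num [div_pow]] at h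
    exact h.mul_left _
  have hterm (l : ℕ) : ‖p.changeOriginSeries k l fun _ ↦ x‖ ≤
      C / a ^ k * ((l + k).choose k * (1 / 2 : ℝ) ^ l) := by
    have hpkl : ‖p (k + l)‖ ≤ C / a ^ (k + l) := by
      rw [le_div_iff₀ (by positivity)]; exact hp _
    have hxl : ‖x‖ ^ l ≤ (a / 2) ^ l := by gcongr; linarith
    calc ‖p.changeOriginSeries k l fun _ ↦ x‖
        ≤ ‖p.changeOriginSeries k l‖ * ‖x‖ ^ l := by
          simpa using (p.changeOriginSeries k l).le_opNorm fun _ ↦ x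
      _ ≤ (k + l).choose l * (C / a ^ (k + l)) * (a / 2) ^ l := by
          refine mul_le_mul ((p.norm_changeOriginSeries_le k l).trans ?_) hxl (by positivity)
            (by positivity)
          gcongr
      _ = C / a ^ k * ((l + k).choose k * (1 / 2 : ℝ) ^ l) := by
          rw [add_comm k l, Nat.choose_symm_add]
          field_simp
          ring
  calc ‖p.changeOrigin x k‖ * (a / 2) ^ k ≤ C / a ^ k * 2 ^ (k + 1) * (a / 2) ^ k := by
        gcongr
        exact tsum_of_norm_bounded hgeom hterm
    _ = 2 * C := by rw [div_pow]; field_simp; ring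

end FormalMultilinearSeries

theorem HasFPowerSeriesOnBall.norm_iteratedFDeriv_le [CompleteSpace F] {f : E → F}
    {p : FormalMultilinearSeries 𝕜 E F} {x : E} {r : ℝ≥0∞} (h : HasFPowerSeriesOnBall f p x r)
    (n : ℕ) : ‖iteratedFDeriv 𝕜 n f x‖ ≤ n ! * ‖p n‖ := by
  refine ContinuousMultilinearMap.opNorm_le_bound (by positivity) fun v ↦ ?_
  rw [h.iteratedFDeriv_eq_sum_of_completeSpace]
  calc _ ≤ ∑ σ : Equiv.Perm (Fin n), ‖p n‖ * ∏ i, ‖v i‖ := by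
        refine norm_sum_le_of_le _ fun σ _ ↦ ?_
        rw [← Equiv.prod_comp σ]
        exact (p n).le_opNorm _
    _ = _ := by simp [Fintype.card_perm, mul_assoc]

theorem AnalyticAt.exists_ball_norm_iteratedFDeriv_le [CompleteSpace F] {f : E → F} {x : E}
    (hf : AnalyticAt 𝕜 f x) : ∃ ε > 0, ∃ A b : ℝ, 0 ≤ A ∧ 0 ≤ b ∧
      ∀ y ∈ Metric.ball x ε, ∀ n, ‖iteratedFDeriv 𝕜 n f y‖ ≤ n ! * A * b ^ n := by
  obtain ⟨p, r, hp⟩ := hf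
  obtain ⟨a, ha0, har⟩ := ENNReal.lt_iff_exists_nnreal_btwn.1 hp.r_pos
  obtain ⟨C, hC, hpC⟩ := p.norm_mul_pow_le_of_lt_radius (har.trans_le hp.r_le)
  have ha : (0 : ℝ) < a := by exact_mod_cast ha0
  refine ⟨a / 2, by positivity, 2 * C, ((a : ℝ) / 2)⁻¹, by positivity, by positivity,
    fun y hy n ↦ ?_⟩
  have hyx : 2 * ‖y - x‖ ≤ a := by
    rw [Metric.mem_ball, dist_eq_norm] at hy; linarith
  have hyr : (‖y - x‖₊ : ℝ≥0∞) < r := by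
    refine lt_of_le_of_lt ?_ har
    exact_mod_cast (show ‖y - x‖ ≤ a by linarith [norm_nonneg (y - x)])
  have hq := hp.changeOrigin hyr
  rw [add_sub_cancel] at hq
  calc ‖iteratedFDeriv 𝕜 n f y‖ ≤ n ! * ‖p.changeOrigin (y - x) n‖ := hq.norm_iteratedFDeriv_le n
    _ ≤ n ! * (2 * C * ((a : ℝ) / 2)⁻¹ ^ n) := by
        gcongr
        rw [inv_pow, ← div_eq_mul_inv, le_div_iff₀ (by positivity)]
        exact p.norm_changeOrigin_mul_pow_le ha hpC hyx n
    _ = n ! * (2 * C) * ((a : ℝ) / 2)⁻¹ ^ n := by ring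

theorem IsCompact.exists_norm_iteratedFDeriv_le_of_analyticAt [CompleteSpace F] {f : E → F}
    {K : Set E} (hK : IsCompact K) (hf : ∀ x ∈ K, AnalyticAt 𝕜 f x) :
    ∃ A b : ℝ, 0 ≤ A ∧ 0 ≤ b ∧ ∀ y ∈ K, ∀ n, ‖iteratedFDeriv 𝕜 n f y‖ ≤ n ! * A * b ^ n := by
  refine hK.induction_on (p := fun s ↦ ∃ A b : ℝ, 0 ≤ A ∧ 0 ≤ b ∧
      ∀ y ∈ s, ∀ n, ‖iteratedFDeriv 𝕜 n f y‖ ≤ n ! * A * b ^ n) ?_ ?_ ?_ ?_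
  · exact ⟨0, 0, le_rfl, le_rfl, by simp⟩
  · rintro s t hst ⟨A, b, hA, hb, h⟩
    exact ⟨A, b, hA, hb, fun y hy ↦ h y (hst hy)⟩
  · rintro s t ⟨A, b, hA, hb, hs⟩ ⟨A', b', hA', hb', ht⟩
    refine ⟨A + A', b + b', by positivity, by positivity, ?_⟩
    rintro y (hy | hy) n
    · refine (hs y hy n).trans ?_
      gcongr <;> linarith
    · refine (ht y hy n).trans ?_
      gcongr <;> linarith
  · intro x hx
    obtain ⟨ε, hε, A, b, hA, hb, h⟩ := (hf x hx).exists_ball_norm_iteratedFDeriv_le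
    exact ⟨Metric.ball x ε, mem_nhdsWithin_of_mem_nhds (Metric.ball_mem_nhds x hε),
      A, b, hA, hb, h⟩

namespace OrderedFinpartition

variable {n : ℕ}

lemma sum_partSize (c : OrderedFinpartition n) : ∑ i, c.partSize i = n := by
  simpa using c.sum_sigma_eq_sum fun _ ↦ (1 : ℕ)

/-- The bound on the term of `c` in Faà di Bruno's formula when `‖D^k g‖ ≤ k!` and
`‖D^j f‖ ≤ j! A`. -/
noncomputable def factorialWeight (A : ℝ) (c : OrderedFinpartition n) : ℝ :=
  A ^ c.length * c.length ! * ∏ i, ((c.partSize i)! : ℝ)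

lemma factorialWeight_extendLeft (A : ℝ) (c : OrderedFinpartition n) :
    c.extendLeft.factorialWeight A = A * (c.length + 1) * c.factorialWeight A := by
  change A ^ (c.length + 1) * (c.length + 1)! *
      ∏ i : Fin (c.length + 1), ((Fin.cons (α := fun _ ↦ ℕ) 1 c.partSize i)! : ℝ) = _
  simp only [Fin.prod_univ_succ, Fin.cons_zero, Fin.cons_succ, Nat.factorial_succ, factorialWeight]
  push_cast
  ring

lemma factorialWeight_extendMiddle (A : ℝ) (c : OrderedFinpartition n) (i : Fin c.length) :
    (c.extendMiddle i).factorialWeight A = (c.partSize i + 1) * c.factorialWeight A := by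
  have hfac : (fun j ↦ ((update c.partSize i (c.partSize i + 1) j)! : ℝ)) =
      update (fun j ↦ ((c.partSize j)! : ℝ)) i ((c.partSize i + 1)! : ℝ) := by
    ext j
    rcases eq_or_ne j i with rfl | hj <;> simp [*]
  change A ^ c.length * c.length ! *
      ∏ j : Fin c.length, ((update c.partSize i (c.partSize i + 1) j)! : ℝ) = _
  rw [factorialWeight, hfac, prod_update_of_mem (mem_univ i), ← mul_prod_erase univ _ (mem_univ i),
    Nat.factorial_succ, sdiff_singleton_eq_erase]
  push_cast
  ring

lemma sum_factorialWeight_extend_le {A : ℝ} (hA : 0 ≤ A) (c : OrderedFinpartition n) :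
    ∑ o : Option (Fin c.length), (c.extend o).factorialWeight A ≤
      (A + 2) * (n + 1) * c.factorialWeight A := by
  have hsize : ∑ i, ((c.partSize i : ℝ) + 1) = n + c.length := by
    rw [sum_add_distrib, ← Nat.cast_sum, c.sum_partSize]
    simp
  have hlen : (c.length : ℝ) ≤ n := by exact_mod_cast c.length_le
  have hw : 0 ≤ c.factorialWeight A := by unfold factorialWeight; positivity
  simp only [Fintype.sum_option, extend_none, extend_some, factorialWeight_extendLeft,
    factorialWeight_extendMiddle, ← sum_mul, hsize]
  nlinarith [mul_nonneg hw (sub_nonneg.2 hlen), mul_nonneg (mul_nonneg hA hw) (sub_nonneg.2 hlen)]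

lemma sum_factorialWeight_le {A : ℝ} (hA : 0 ≤ A) (n : ℕ) :
    ∑ c : OrderedFinpartition n, c.factorialWeight A ≤ (A + 2) ^ n * n ! := by
  induction n with
  | zero => simp [factorialWeight]
  | succ n ih =>
    rw [← (extendEquiv n).sum_comp, Fintype.sum_sigma]
    calc ∑ c : OrderedFinpartition n, ∑ o, (c.extend o).factorialWeight A
        ≤ ∑ c : OrderedFinpartition n, (A + 2) * (n + 1) * c.factorialWeight A :=
          sum_le_sum fun c _ ↦ sum_factorialWeight_extend_le hA c
      _ ≤ (A + 2) * (n + 1) * ((A + 2) ^ n * n !) := by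
          rw [← mul_sum]; gcongr
      _ = (A + 2) ^ (n + 1) * (n + 1)! := by
          rw [Nat.factorial_succ]; push_cast; ring

end OrderedFinpartition

theorem norm_iteratedFDerivWithin_comp_le_of_factorial_bounds {g : F → G} {f : E → F}
    {s : Set E} {t : Set F} {x : E} {N : WithTop ℕ∞} {n : ℕ}
    (hg : ContDiffOn 𝕜 N g t) (hf : ContDiffOn 𝕜 N f s) (hn : n ≤ N)
    (ht : UniqueDiffOn 𝕜 t) (hs : UniqueDiffOn 𝕜 s) (hst : MapsTo f s t) (hx : x ∈ s)
    {S A b : ℝ} (hA : 0 ≤ A) (hb : 0 ≤ b)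
    (hgS : ∀ k ≤ n, ‖iteratedFDerivWithin 𝕜 k g t (f x)‖ ≤ k ! * S)
    (hfA : ∀ k ≤ n, ‖iteratedFDerivWithin 𝕜 k f s x‖ ≤ k ! * A * b ^ k) :
    ‖iteratedFDerivWithin 𝕜 n (g ∘ f) s x‖ ≤ n ! * S * ((A + 2) * b) ^ n := by
  have hS : 0 ≤ S := by simpa using (norm_nonneg _).trans (hgS 0 n.zero_le)
  have hterm (c : OrderedFinpartition n) :
      ‖iteratedFDerivWithin 𝕜 c.length g t (f x)‖ *
          ∏ i, ‖iteratedFDerivWithin 𝕜 (c.partSize i) f s x‖ ≤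
        S * b ^ n * c.factorialWeight A := by
    calc _ ≤ (c.length ! * S) * ∏ i, ((c.partSize i)! * A * b ^ c.partSize i) := by
          gcongr with i
          · exact hgS _ c.length_le
          · exact hfA _ (c.partSize_le i)
      _ = S * b ^ n * c.factorialWeight A := by
          rw [prod_mul_distrib, prod_mul_distrib, prod_const, prod_pow_eq_pow_sum, c.sum_partSize,
            OrderedFinpartition.factorialWeight, card_univ, Fintype.card_fin]
          ring
  have hTaylor := (hg.ftaylorSeriesWithin ht).comp (hf.ftaylorSeriesWithin hs) hst
  rw [← hTaylor.eq_iteratedFDerivWithin_of_uniqueDiffOn hn hs hx]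
  calc _ ≤ ∑ c : OrderedFinpartition n, S * b ^ n * c.factorialWeight A :=
        norm_sum_le_of_le _ fun c _ ↦
          (c.norm_compAlongOrderedFinpartition_le _ _).trans (hterm c)
    _ ≤ S * b ^ n * ((A + 2) ^ n * n !) := by
        rw [← mul_sum]
        gcongr
        exact OrderedFinpartition.sum_factorialWeight_le hA n
    _ = n ! * S * ((A + 2) * b) ^ n := by rw [mul_pow]; ring

lemma le_factorial_mul_sum_range_div_factorial {a : ℕ → ℝ} (ha : ∀ j, 0 ≤ a j) {j m : ℕ}
    (hjm : j ≤ m) : a j ≤ j ! * ∑ i ∈ range (m + 1), a i / i ! := by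
  have hj : a j / j ! ≤ ∑ i ∈ range (m + 1), a i / i ! :=
    single_le_sum (f := fun i ↦ a i / i !) (fun i _ ↦ by have := ha i; positivity)
      (mem_range.2 (Nat.lt_succ_of_le hjm))
  rwa [div_le_iff₀ (by positivity), mul_comm] at hj

lemma sum_range_div_factorial_le {a : ℕ → ℝ} {S β : ℝ} {m : ℕ} (hS : 0 ≤ S) (hβ : 1 ≤ β)
    (ha : ∀ j ≤ m, a j ≤ j ! * S * β ^ j) :
    ∑ j ∈ range (m + 1), a j / j ! ≤ (2 * β) ^ m * S :=
  calc ∑ j ∈ range (m + 1), a j / j ! ≤ ∑ _j ∈ range (m + 1), S * β ^ m := by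
        refine sum_le_sum fun j hj ↦ ?_
        have hjm := Nat.lt_succ_iff.1 (mem_range.1 hj)
        rw [div_le_iff₀ (by positivity)]
        calc a j ≤ j ! * S * β ^ j := ha j hjm
          _ ≤ j ! * S * β ^ m := by gcongr
          _ = S * β ^ m * j ! := by ring
    _ = (m + 1) * S * β ^ m := by simp [mul_assoc]
    _ ≤ 2 ^ m * S * β ^ m := by
        gcongr
        exact_mod_cast Nat.lt_two_pow_self
    _ = (2 * β) ^ m * S := by rw [mul_pow]; ring

/-- Jet-norm estimate for composition with a real analytic map: if `Φ` is real analytic on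
an open set `U ⊆ ℝᵖ` with `Φ '' U ⊆ V` for an open `V ⊆ ℝ^q`, then for every compact
`K ⊆ U` there are `C, σ > 0` such that for every `f` that is `C^∞` on `V`, every `m` and
every `x ∈ K`, the `m`-jet norm of `f ∘ Φ` at `x` is at most `C σ⁻ᵐ` times the `m`-jet norm
of `f` at `Φ x`. -/
theorem jet_norm_comp_analytic_estimate
    (p q : ℕ) (U : Set (Fin p → ℝ)) (V : Set (Fin q → ℝ)) (hU : IsOpen U) (hV : IsOpen V)
    (Φ : (Fin p → ℝ) → (Fin q → ℝ)) (hΦ : AnalyticOnNhd ℝ Φ U) (hΦUV : Φ '' U ⊆ V) :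
    ∀ K : Set (Fin p → ℝ), K ⊆ U → IsCompact K →
      ∃ C > (0 : ℝ), ∃ σ > (0 : ℝ),
        ∀ f : (Fin q → ℝ) → ℝ, ContDiffOn ℝ (⊤ : ℕ∞) f V →
          ∀ (m : ℕ), ∀ x ∈ K,
            ∑ j ∈ Finset.range (m + 1),
                ‖iteratedFDerivWithin ℝ j (f ∘ Φ) U x‖ / (j.factorial : ℝ)
              ≤ C * σ ^ (-(m : ℤ)) *
                ∑ j ∈ Finset.range (m + 1),
                  ‖iteratedFDerivWithin ℝ j f V (Φ x)‖ / (j.factorial : ℝ) := by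
  intro K hKU hK
  obtain ⟨A, b, hA, hb, hΦK⟩ :=
    hK.exists_norm_iteratedFDeriv_le_of_analyticAt fun x hx ↦ hΦ x (hKU hx)
  refine ⟨1, one_pos, (2 * ((A + 2) * (b + 1)))⁻¹, by positivity, fun f hf m x hx ↦ ?_⟩
  rw [inv_zpow', neg_neg, zpow_natCast, one_mul]
  have hΦx (k : ℕ) : ‖iteratedFDerivWithin ℝ k Φ U x‖ ≤ k ! * A * (b + 1) ^ k := by
    rw [iteratedFDerivWithin_of_isOpen k hU (hKU hx)]
    exact (hΦK x hx k).trans (by gcongr; linarith)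
  refine sum_range_div_factorial_le (by positivity) (by nlinarith) fun j hj ↦ ?_
  exact norm_iteratedFDerivWithin_comp_le_of_factorial_bounds hf (hΦ.contDiffOn hU.uniqueDiffOn)
    (by exact_mod_cast le_top) hV.uniqueDiffOn hU.uniqueDiffOn (fun y hy ↦ hΦUV ⟨y, hy, rfl⟩)
    (hKU hx) hA (by linarith)
    (fun k hk ↦ le_factorial_mul_sum_range_div_factorial
      (a := fun i ↦ ‖iteratedFDerivWithin ℝ i f V (Φ x)‖) (fun _ ↦ norm_nonneg _) (hk.trans hj))
    (fun k _ ↦ hΦx k)
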